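/- arXiv:math/9810044 — 4 statements merged into one kernel-verified Lean document; each statement's English description precedes it below -/
import Mathlib

section
/- Let H₁' = A₁ + B₁₂Q₂₁ with Q₂₁ satisfying the Riccati equation Q₂₁A₁ - A₂Q₂₁ + Q₂₁B₁₂Q₂₁ = B₂₁ (B₂₁ = B₁₂*) and ‖Q₂₁‖ < 1. Set X₁ = I₁ + Q₂₁*Q₂₁. Then H₁'' := X₁^{1/2} H₁' X₁^{-1/2} is self-adjoint on H₁; equivalently, X₁ H₁' = (H₁')* X₁. -/
open ContinuousLinearMap

variable {H₁ H₂ : Type*} [NormedAddCommGroup H₁] [InnerProductSpace ℂ H₁] [CompleteSpace H₁]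
  [NormedAddCommGroup H₂] [InnerProductSpace ℂ H₂] [CompleteSpace H₂]

/-- `H₁'' = X₁^{1/2} H₁' X₁^{-1/2}` is self-adjoint; equivalently `X₁ H₁' = (H₁')* X₁`. -/
theorem stmt5 (A₁ : H₁ →L[ℂ] H₁) (A₂ : H₂ →L[ℂ] H₂) (B₁₂ : H₂ →L[ℂ] H₁)
    (hA₁ : IsSelfAdjoint A₁) (hA₂ : IsSelfAdjoint A₂)
    (Q₂₁ : H₁ →L[ℂ] H₂) (hQ : ‖Q₂₁‖ < 1)
    (hRic : Q₂₁ ∘L A₁ - A₂ ∘L Q₂₁ + Q₂₁ ∘L B₁₂ ∘L Q₂₁ = adjoint B₁₂) :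
    (1 + adjoint Q₂₁ ∘L Q₂₁) ∘L (A₁ + B₁₂ ∘L Q₂₁) =
      adjoint (A₁ + B₁₂ ∘L Q₂₁) ∘L (1 + adjoint Q₂₁ ∘L Q₂₁) := by
  have hA₁' : adjoint A₁ = A₁ := hA₁
  have hA₂' : adjoint A₂ = A₂ := hA₂
  -- adjoint of the Riccati equation
  have hB : A₁ ∘L adjoint Q₂₁ - adjoint Q₂₁ ∘L A₂ + adjoint Q₂₁ ∘L (adjoint B₁₂ ∘L adjoint Q₂₁) = B₁₂ := by
    have h := congrArg adjoint hRic
    simpa only [map_add, map_sub, adjoint_comp, adjoint_adjoint, hA₁', hA₂', comp_assoc] using h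
  have key2 : B₁₂ ∘L Q₂₁ = A₁ ∘L (adjoint Q₂₁ ∘L Q₂₁) - adjoint Q₂₁ ∘L (A₂ ∘L Q₂₁)
      + adjoint Q₂₁ ∘L (adjoint B₁₂ ∘L (adjoint Q₂₁ ∘L Q₂₁)) := by
    conv_lhs => rw [← hB]
    simp only [add_comp, sub_comp, comp_assoc]
  have key1 : adjoint Q₂₁ ∘L adjoint B₁₂ = adjoint Q₂₁ ∘L (Q₂₁ ∘L A₁)
      - adjoint Q₂₁ ∘L (A₂ ∘L Q₂₁) + adjoint Q₂₁ ∘L (Q₂₁ ∘L (B₁₂ ∘L Q₂₁)) := by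
    rw [← hRic]; simp only [comp_add, comp_sub, comp_assoc]
  simp only [add_comp, comp_add, map_add, adjoint_comp, hA₁', comp_assoc,
    one_def, ContinuousLinearMap.comp_id, ContinuousLinearMap.id_comp]
  nth_rewrite 1 [key2]
  rw [key1]
  abel
end

section
/- Under the assumptions of the block-diagonalization lemma (Q₂₁, Q₁₂ = -Q₂₁* solving the Riccati equations, ‖Q₂₁‖ < 1), the spectrum of the self-adjoint block operator H = [[A₁,B₁₂],[B₂₁,A₂]] equals the union of the spectra of H₁' = A₁ + B₁₂Q₂₁ and H₂' = A₂ + B₂₁Q₁₂; in particular the spectra of H₁' and H₂' are real. -/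
open ContinuousLinearMap

variable {H₁ H₂ : Type*} [NormedAddCommGroup H₁] [InnerProductSpace ℂ H₁] [CompleteSpace H₁]
  [NormedAddCommGroup H₂] [InnerProductSpace ℂ H₂] [CompleteSpace H₂]

/-- The block operator `[[T₁₁, T₁₂],[T₂₁, T₂₂]]` acting on `H₁ ⊕ H₂`. -/
noncomputable def blockOp (T₁₁ : H₁ →L[ℂ] H₁) (T₁₂ : H₂ →L[ℂ] H₁)
    (T₂₁ : H₁ →L[ℂ] H₂) (T₂₂ : H₂ →L[ℂ] H₂) : (H₁ × H₂) →L[ℂ] (H₁ × H₂) :=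
  (T₁₁ ∘L fst ℂ H₁ H₂ + T₁₂ ∘L snd ℂ H₁ H₂).prod
    (T₂₁ ∘L fst ℂ H₁ H₂ + T₂₂ ∘L snd ℂ H₁ H₂)

set_option linter.unusedSectionVars false in
lemma blockOp_apply (T₁₁ : H₁ →L[ℂ] H₁) (T₁₂ : H₂ →L[ℂ] H₁)
    (T₂₁ : H₁ →L[ℂ] H₂) (T₂₂ : H₂ →L[ℂ] H₂) (x : H₁ × H₂) :
    blockOp T₁₁ T₁₂ T₂₁ T₂₂ x = (T₁₁ x.1 + T₁₂ x.2, T₂₁ x.1 + T₂₂ x.2) := rfl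

set_option linter.unusedSectionVars false in
lemma isUnit_blockOp_diag (S : H₁ →L[ℂ] H₁) (T : H₂ →L[ℂ] H₂) :
    IsUnit (blockOp S 0 0 T) ↔ IsUnit S ∧ IsUnit T := by
  constructor
  · rintro ⟨u, hu⟩
    have h1 : blockOp S 0 0 T * ↑u⁻¹ = 1 := by rw [← hu]; exact u.mul_inv
    have h2 : (↑u⁻¹ : (H₁ × H₂) →L[ℂ] (H₁ × H₂)) * blockOp S 0 0 T = 1 := by
      rw [← hu]; exact u.inv_mul
    set V : (H₁ × H₂) →L[ℂ] (H₁ × H₂) := ↑u⁻¹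
    constructor
    · refine isUnit_iff_exists.2 ⟨fst ℂ H₁ H₂ ∘L V ∘L inl ℂ H₁ H₂, ?_, ?_⟩
      · ext x
        have := congrArg Prod.fst (DFunLike.congr_fun h1 (x, 0))
        simpa [blockOp_apply, mul_apply'] using this
      · ext x
        have := congrArg Prod.fst (DFunLike.congr_fun h2 (x, 0))
        simpa [blockOp_apply, mul_apply'] using this
    · refine isUnit_iff_exists.2 ⟨snd ℂ H₁ H₂ ∘L V ∘L inr ℂ H₁ H₂, ?_, ?_⟩
      · ext x
        have := congrArg Prod.snd (DFunLike.congr_fun h1 ((0 : H₁), x))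
        simpa [blockOp_apply, mul_apply'] using this
      · ext x
        have := congrArg Prod.snd (DFunLike.congr_fun h2 ((0 : H₁), x))
        simpa [blockOp_apply, mul_apply'] using this
  · rintro ⟨⟨s, hs⟩, ⟨t, ht⟩⟩
    have hs1 : ∀ x, (↑s : H₁ →L[ℂ] H₁) ((↑s⁻¹ : H₁ →L[ℂ] H₁) x) = x := fun x => by
      rw [← ContinuousLinearMap.mul_apply, s.mul_inv]; rfl
    have hs2 : ∀ x, (↑s⁻¹ : H₁ →L[ℂ] H₁) ((↑s : H₁ →L[ℂ] H₁) x) = x := fun x => by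
      rw [← ContinuousLinearMap.mul_apply, s.inv_mul]; rfl
    have ht1 : ∀ x, (↑t : H₂ →L[ℂ] H₂) ((↑t⁻¹ : H₂ →L[ℂ] H₂) x) = x := fun x => by
      rw [← ContinuousLinearMap.mul_apply, t.mul_inv]; rfl
    have ht2 : ∀ x, (↑t⁻¹ : H₂ →L[ℂ] H₂) ((↑t : H₂ →L[ℂ] H₂) x) = x := fun x => by
      rw [← ContinuousLinearMap.mul_apply, t.inv_mul]; rfl
    refine isUnit_iff_exists.2 ⟨blockOp ↑s⁻¹ 0 0 ↑t⁻¹, ?_, ?_⟩ <;>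
    · ext x <;> simp [← hs, ← ht, blockOp_apply, mul_apply', hs1, hs2, ht1, ht2]

set_option linter.unusedSectionVars false in
lemma spectrum_blockOp_diag (S : H₁ →L[ℂ] H₁) (T : H₂ →L[ℂ] H₂) :
    spectrum ℂ (blockOp S 0 0 T) = spectrum ℂ S ∪ spectrum ℂ T := by
  ext z
  have key : algebraMap ℂ _ z - blockOp S 0 0 T
      = blockOp (algebraMap ℂ _ z - S) 0 0 (algebraMap ℂ _ z - T) := by
    ext x <;> simp [blockOp_apply, Algebra.algebraMap_eq_smul_one]
  simp only [spectrum.mem_iff, Set.mem_union, key, isUnit_blockOp_diag]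
  tauto

/-- Conjugation by a continuous linear equivalence, as an algebra equivalence of the
endomorphism algebras. -/
noncomputable def cleConjAlgEquiv {E F : Type*} [NormedAddCommGroup E] [NormedSpace ℂ E]
    [NormedAddCommGroup F] [NormedSpace ℂ F] (e : E ≃L[ℂ] F) :
    (F →L[ℂ] F) ≃ₐ[ℂ] (E →L[ℂ] E) where
  toFun g := (e.symm : F →L[ℂ] E) ∘L g ∘L (e : E →L[ℂ] F)
  invFun g := (e : E →L[ℂ] F) ∘L g ∘L (e.symm : F →L[ℂ] E)
  left_inv g := by ext x; simp
  right_inv g := by ext x; simp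
  map_mul' g h := by ext x; simp [ContinuousLinearMap.mul_apply]
  map_add' g h := by ext x; simp
  commutes' z := by ext x; simp [Algebra.algebraMap_eq_smul_one]

set_option linter.unusedSectionVars false in
lemma isSelfAdjoint_conj_blockOp (A₁ : H₁ →L[ℂ] H₁) (A₂ : H₂ →L[ℂ] H₂) (B₁₂ : H₂ →L[ℂ] H₁)
    (hA₁ : IsSelfAdjoint A₁) (hA₂ : IsSelfAdjoint A₂) :
    IsSelfAdjoint (cleConjAlgEquiv (WithLp.prodContinuousLinearEquiv 2 ℂ H₁ H₂)
      (blockOp A₁ B₁₂ (adjoint B₁₂) A₂)) := by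
  rw [ContinuousLinearMap.isSelfAdjoint_iff_isSymmetric]
  intro x y
  simp only [cleConjAlgEquiv, AlgEquiv.coe_mk, Equiv.coe_fn_mk, coe_comp', Function.comp_apply,
    ContinuousLinearEquiv.coe_coe]
  rw [WithLp.prod_inner_apply, WithLp.prod_inner_apply]
  have h1 : ∀ a b : H₁, (inner ℂ (A₁ a) b : ℂ) = inner ℂ a (A₁ b) := fun a b => by
    conv_lhs => rw [← hA₁.adjoint_eq]
    exact ContinuousLinearMap.adjoint_inner_left _ _ _
  have h2 : ∀ a b : H₂, (inner ℂ (A₂ a) b : ℂ) = inner ℂ a (A₂ b) := fun a b => by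
    conv_lhs => rw [← hA₂.adjoint_eq]
    exact ContinuousLinearMap.adjoint_inner_left _ _ _
  change inner ℂ (A₁ x.ofLp.1 + B₁₂ x.ofLp.2) y.ofLp.1 + inner ℂ ((adjoint B₁₂) x.ofLp.1 + A₂ x.ofLp.2) y.ofLp.2
      = inner ℂ x.ofLp.1 (A₁ y.ofLp.1 + B₁₂ y.ofLp.2) + inner ℂ x.ofLp.2 ((adjoint B₁₂) y.ofLp.1 + A₂ y.ofLp.2)
  simp only [inner_add_left, inner_add_right]
  rw [h1 x.ofLp.1 y.ofLp.1, h2 x.ofLp.2 y.ofLp.2, ← ContinuousLinearMap.adjoint_inner_right B₁₂,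
    ContinuousLinearMap.adjoint_inner_left B₁₂]
  ring

set_option maxHeartbeats 1000000 in
theorem stmt6 (A₁ : H₁ →L[ℂ] H₁) (A₂ : H₂ →L[ℂ] H₂) (B₁₂ : H₂ →L[ℂ] H₁)
    (hA₁ : IsSelfAdjoint A₁) (hA₂ : IsSelfAdjoint A₂)
    (Q₂₁ : H₁ →L[ℂ] H₂) (hQ : ‖Q₂₁‖ < 1)
    (hRic₁ : Q₂₁ ∘L A₁ - A₂ ∘L Q₂₁ + Q₂₁ ∘L B₁₂ ∘L Q₂₁ = adjoint B₁₂)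
    (hRic₂ : (-adjoint Q₂₁) ∘L A₂ - A₁ ∘L (-adjoint Q₂₁)
        + (-adjoint Q₂₁) ∘L adjoint B₁₂ ∘L (-adjoint Q₂₁) = B₁₂) :
    spectrum ℂ (blockOp A₁ B₁₂ (adjoint B₁₂) A₂) =
        spectrum ℂ (A₁ + B₁₂ ∘L Q₂₁) ∪ spectrum ℂ (A₂ + adjoint B₁₂ ∘L (-adjoint Q₂₁)) ∧
      (∀ z ∈ spectrum ℂ (A₁ + B₁₂ ∘L Q₂₁), z.im = 0) ∧
      (∀ z ∈ spectrum ℂ (A₂ + adjoint B₁₂ ∘L (-adjoint Q₂₁)), z.im = 0) := by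
  -- the similarity transform
  set N : (H₁ × H₂) →L[ℂ] (H₁ × H₂) := blockOp 0 (adjoint Q₂₁) (-Q₂₁) 0 with hN
  have hadj : ‖adjoint Q₂₁‖ = ‖Q₂₁‖ := ContinuousLinearMap.adjoint.norm_map Q₂₁
  have hNle : ‖N‖ ≤ ‖Q₂₁‖ := by
    refine opNorm_le_bound _ (norm_nonneg _) fun x => ?_
    rw [hN, blockOp_apply]
    simp only [zero_apply, zero_add, add_zero, neg_apply]
    rw [Prod.norm_def]
    simp only [norm_neg]
    refine max_le ?_ ?_
    · calc ‖adjoint Q₂₁ x.2‖ ≤ ‖adjoint Q₂₁‖ * ‖x.2‖ := le_opNorm _ _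
        _ ≤ ‖Q₂₁‖ * ‖x‖ := by
          rw [hadj]; exact mul_le_mul_of_nonneg_left (norm_snd_le x) (norm_nonneg _)
    · calc ‖Q₂₁ x.1‖ ≤ ‖Q₂₁‖ * ‖x.1‖ := le_opNorm _ _
        _ ≤ ‖Q₂₁‖ * ‖x‖ := mul_le_mul_of_nonneg_left (norm_fst_le x) (norm_nonneg _)
  have hr1' : ∀ x, (adjoint B₁₂) x = Q₂₁ (A₁ x) - A₂ (Q₂₁ x) + Q₂₁ (B₁₂ (Q₂₁ x)) := by
    intro x
    have h := DFunLike.congr_fun hRic₁ x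
    simp only [coe_sub', coe_add', coe_comp', Pi.sub_apply, Pi.add_apply,
      Function.comp_apply] at h
    rw [← h]
  have hr2' : ∀ y, B₁₂ y = A₁ ((adjoint Q₂₁) y) - (adjoint Q₂₁) (A₂ y)
      + (adjoint Q₂₁) ((adjoint B₁₂) ((adjoint Q₂₁) y)) := by
    intro y
    have h := DFunLike.congr_fun hRic₂ y
    simp only [coe_sub', coe_add', coe_comp', coe_neg', Pi.sub_apply, Pi.add_apply,
      Pi.neg_apply, Function.comp_apply, map_neg, neg_neg] at h
    rw [← h]; abel
  have hu : blockOp 1 (-adjoint Q₂₁) Q₂₁ 1 = 1 - N := by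
    ext x <;> simp [hN, blockOp_apply]
  set u := Units.oneSub N (lt_of_le_of_lt hNle hQ) with hudef
  have huval : (↑u : (H₁ × H₂) →L[ℂ] (H₁ × H₂)) = blockOp 1 (-adjoint Q₂₁) Q₂₁ 1 := by
    rw [hu]; rfl
  have key : blockOp A₁ B₁₂ (adjoint B₁₂) A₂ * ↑u
      = ↑u * blockOp (A₁ + B₁₂ ∘L Q₂₁) 0 0 (A₂ + adjoint B₁₂ ∘L (-adjoint Q₂₁)) := by
    ext x
    all_goals
      simp only [huval, ContinuousLinearMap.mul_apply, blockOp_apply, ContinuousLinearMap.one_apply, zero_apply,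
        ContinuousLinearMap.add_apply, ContinuousLinearMap.neg_apply, coe_comp', Function.comp_apply, map_add, map_sub, map_neg,
        add_zero, zero_add, inl_apply, inr_apply, map_zero, neg_zero, neg_neg]
    · rw [hr1' x]; abel
    · rw [hr2' x]; abel
    · abel
  have hconj : blockOp A₁ B₁₂ (adjoint B₁₂) A₂
      = ↑u * blockOp (A₁ + B₁₂ ∘L Q₂₁) 0 0 (A₂ + adjoint B₁₂ ∘L (-adjoint Q₂₁)) * ↑u⁻¹ := by
    rw [Units.eq_mul_inv_iff_mul_eq, key]
  have hspec : spectrum ℂ (blockOp A₁ B₁₂ (adjoint B₁₂) A₂)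
      = spectrum ℂ (A₁ + B₁₂ ∘L Q₂₁) ∪ spectrum ℂ (A₂ + adjoint B₁₂ ∘L (-adjoint Q₂₁)) := by
    rw [hconj, spectrum.units_conjugate, spectrum_blockOp_diag]
  -- realness via self-adjointness on the `L²` product
  have hspec2 : spectrum ℂ (blockOp A₁ B₁₂ (adjoint B₁₂) A₂)
      = spectrum ℂ (cleConjAlgEquiv (WithLp.prodContinuousLinearEquiv 2 ℂ H₁ H₂)
          (blockOp A₁ B₁₂ (adjoint B₁₂) A₂)) :=
    (AlgEquiv.spectrum_eq _ _).symm
  have hsa := isSelfAdjoint_conj_blockOp A₁ A₂ B₁₂ hA₁ hA₂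
  have hreal : ∀ z ∈ spectrum ℂ (blockOp A₁ B₁₂ (adjoint B₁₂) A₂), z.im = 0 := by
    intro z hz
    rw [hspec2] at hz
    exact hsa.im_eq_zero_of_mem_spectrum hz
  refine ⟨hspec, fun z hz => hreal z ?_, fun z hz => hreal z ?_⟩ <;>
    rw [hspec] <;> [exact Set.mem_union_left _ hz; exact Set.mem_union_right _ hz]
end

section
/- Let Q : H₁ → H₂ be bounded with ‖Q‖ < 1, and let H₁' = A₁ + B₁₂Q satisfy the intertwining from the block-diagonalization (i.e., Q solves the Riccati equation). If ψ is an eigenvector of H₁' with eigenvalue z, then (ψ, Qψ) ∈ H₁ ⊕ H₂ is an eigenvector of the self-adjoint operator H = [[A₁,B₁₂],[B₂₁,A₂]] with the same eigenvalue z; in particular z ∈ ℝ. -/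
open ContinuousLinearMap

variable {H₁ H₂ : Type*} [NormedAddCommGroup H₁] [InnerProductSpace ℂ H₁] [CompleteSpace H₁]
  [NormedAddCommGroup H₂] [InnerProductSpace ℂ H₂] [CompleteSpace H₂]

theorem stmt16 (A₁ : H₁ →L[ℂ] H₁) (A₂ : H₂ →L[ℂ] H₂) (B₁₂ : H₂ →L[ℂ] H₁)
    (hA₁ : IsSelfAdjoint A₁) (hA₂ : IsSelfAdjoint A₂)
    (Q : H₁ →L[ℂ] H₂) (hQ : ‖Q‖ < 1)
    (hRic : Q ∘L A₁ - A₂ ∘L Q + Q ∘L B₁₂ ∘L Q = adjoint B₁₂)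
    (z : ℂ) (ψ : H₁) (hψ : ψ ≠ 0) (heig : (A₁ + B₁₂ ∘L Q) ψ = z • ψ) :
    (A₁ ψ + B₁₂ (Q ψ) = z • ψ ∧ adjoint B₁₂ ψ + A₂ (Q ψ) = z • (Q ψ)) ∧
      z.im = 0 := by
  have e1 : A₁ ψ + B₁₂ (Q ψ) = z • ψ := by simpa using heig
  have hRψ : Q (A₁ ψ) - A₂ (Q ψ) + Q (B₁₂ (Q ψ)) = adjoint B₁₂ ψ := by
    have := congrArg (fun T : H₁ →L[ℂ] H₂ => T ψ) hRic
    simpa using this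
  have e2 : adjoint B₁₂ ψ + A₂ (Q ψ) = z • (Q ψ) := by
    calc adjoint B₁₂ ψ + A₂ (Q ψ)
        = Q (A₁ ψ) + Q (B₁₂ (Q ψ)) := by rw [← hRψ]; abel
      _ = Q (A₁ ψ + B₁₂ (Q ψ)) := by rw [map_add]
      _ = z • Q ψ := by rw [e1, map_smul]
  refine ⟨⟨e1, e2⟩, ?_⟩
  set s : ℂ := inner ℂ ψ (A₁ ψ) + inner ℂ ψ (B₁₂ (Q ψ)) + inner ℂ (Q ψ) (adjoint B₁₂ ψ)
      + inner ℂ (Q ψ) (A₂ (Q ψ)) with hs_def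
  have hval : s = z * ((‖ψ‖ : ℂ) ^ 2 + (‖Q ψ‖ : ℂ) ^ 2) := by
    have h1 : (inner ℂ ψ (A₁ ψ) + inner ℂ ψ (B₁₂ (Q ψ)) : ℂ) = z * (‖ψ‖ : ℂ) ^ 2 := by
      rw [← inner_add_right, e1, inner_smul_right, inner_self_eq_norm_sq_to_K]
      rfl
    have h2 : (inner ℂ (Q ψ) (adjoint B₁₂ ψ) + inner ℂ (Q ψ) (A₂ (Q ψ)) : ℂ)
        = z * (‖Q ψ‖ : ℂ) ^ 2 := by
      rw [← inner_add_right, e2, inner_smul_right, inner_self_eq_norm_sq_to_K]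
      rfl
    rw [hs_def]
    linear_combination h1 + h2
  have hconj : (starRingEnd ℂ) s = s := by
    rw [hs_def]
    simp only [map_add]
    rw [inner_conj_symm, inner_conj_symm, inner_conj_symm, inner_conj_symm]
    have c1 : (inner ℂ (A₁ ψ) ψ : ℂ) = inner ℂ ψ (A₁ ψ) := by
      conv_lhs => rw [← hA₁.adjoint_eq]
      rw [adjoint_inner_left]
    have c2 : (inner ℂ (A₂ (Q ψ)) (Q ψ) : ℂ) = inner ℂ (Q ψ) (A₂ (Q ψ)) := by
      conv_lhs => rw [← hA₂.adjoint_eq]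
      rw [adjoint_inner_left]
    have c3 : (inner ℂ (B₁₂ (Q ψ)) ψ : ℂ) = inner ℂ (Q ψ) (adjoint B₁₂ ψ) := by
      rw [adjoint_inner_right]
    have c4 : (inner ℂ (adjoint B₁₂ ψ) (Q ψ) : ℂ) = inner ℂ ψ (B₁₂ (Q ψ)) := by
      rw [adjoint_inner_left]
    rw [c1, c2, c3, c4]; ring
  have him : s.im = 0 := by
    have := congrArg Complex.im hconj
    simp [Complex.conj_im] at this
    linarith
  have hr : (0 : ℝ) < ‖ψ‖ ^ 2 + ‖Q ψ‖ ^ 2 := by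
    have h0 : 0 < ‖ψ‖ := norm_pos_iff.mpr hψ
    nlinarith [sq_nonneg ‖Q ψ‖]
  have hval' : s = z * ((‖ψ‖ ^ 2 + ‖Q ψ‖ ^ 2 : ℝ) : ℂ) := by
    rw [hval]; push_cast; ring
  rw [hval'] at him
  rw [Complex.mul_im, Complex.ofReal_im, Complex.ofReal_re, mul_zero, zero_add] at him
  rcases mul_eq_zero.mp him with h | h
  · exact h
  · exact absurd h (ne_of_gt hr)
end

section
/- Let A₁, A₂ be bounded self-adjoint operators on finite-dimensional Hilbert spaces H₁, H₂ with dist(σ(A₁), σ(A₂)) = d₀ > 0, and B₂₁ : H₁ → H₂ with Hilbert–Schmidt (Frobenius) norm ‖B₂₁‖_HS < d₀/2. Then there exists a solution Q : H₁ → H₂ with ‖Q‖ ≤ 1 of the Riccati equation QA₁ - A₂Q + QB₂₁*Q = B₂₁. -/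
open ContinuousLinearMap

section RiccatiAux

attribute [local instance] Matrix.frobeniusNormedAddCommGroup Matrix.frobeniusNormedSpace

open scoped ComplexConjugate Matrix

private lemma frob_norm_eq_sqrt {m n : Type*} [Fintype m] [Fintype n] (A : Matrix m n ℂ) :
    ‖A‖ = Real.sqrt (∑ i, ∑ j, ‖A i j‖ ^ 2) := by
  rw [Matrix.frobenius_norm_def, Real.sqrt_eq_rpow]
  congr 1
  refine Finset.sum_congr rfl fun i _ => Finset.sum_congr rfl fun j _ => ?_
  rw [Real.rpow_two]

private lemma frob_le_of_entrywise {m n : Type*} [Fintype m] [Fintype n]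
    (X Y : Matrix m n ℂ) (c : ℝ) (hc : 0 ≤ c)
    (h : ∀ i j, ‖X i j‖ ≤ c * ‖Y i j‖) : ‖X‖ ≤ c * ‖Y‖ := by
  rw [frob_norm_eq_sqrt, frob_norm_eq_sqrt]
  have h1 : ∑ i, ∑ j, ‖X i j‖ ^ 2 ≤ c ^ 2 * ∑ i, ∑ j, ‖Y i j‖ ^ 2 := by
    rw [Finset.mul_sum]
    refine Finset.sum_le_sum fun i _ => ?_
    rw [Finset.mul_sum]
    refine Finset.sum_le_sum fun j _ => ?_
    calc ‖X i j‖ ^ 2 ≤ (c * ‖Y i j‖) ^ 2 := by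
          exact pow_le_pow_left₀ (norm_nonneg _) (h i j) 2
      _ = c ^ 2 * ‖Y i j‖ ^ 2 := by ring
  calc Real.sqrt (∑ i, ∑ j, ‖X i j‖ ^ 2)
      ≤ Real.sqrt (c ^ 2 * ∑ i, ∑ j, ‖Y i j‖ ^ 2) := Real.sqrt_le_sqrt h1
    _ = c * Real.sqrt (∑ i, ∑ j, ‖Y i j‖ ^ 2) := by
        rw [Real.sqrt_mul (by positivity), Real.sqrt_sq hc]

set_option maxHeartbeats 2000000 in
private lemma matrix_riccati {m n : Type*} [Fintype m] [Fintype n]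
    (lam : n → ℝ) (mu : m → ℝ) (d₀ : ℝ) (hd₀ : 0 < d₀)
    (hsep : ∀ j i, d₀ ≤ ‖(lam i : ℂ) - (mu j : ℂ)‖)
    (B : Matrix m n ℂ) (hB : ‖B‖ < d₀ / 2) :
    ∃ q : Matrix m n ℂ, ‖q‖ ≤ 2 * ‖B‖ / d₀ ∧
      ∀ j i, q j i * ((lam i : ℂ) - (mu j : ℂ)) + (q * Bᴴ * q) j i = B j i := by
  haveI : CompleteSpace (Matrix m n ℂ) := FiniteDimensional.complete ℂ _
  set r : ℝ := 2 * ‖B‖ / d₀ with hr_def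
  have hB0 : 0 ≤ ‖B‖ := norm_nonneg _
  have hr0 : 0 ≤ r := by positivity
  have hr1 : r < 1 := by
    rw [hr_def, div_lt_one hd₀]; linarith
  have hne : ∀ (j : m) (i : n), ((lam i : ℂ) - (mu j : ℂ)) ≠ 0 := by
    intro j i
    intro hzero
    have := hsep j i
    rw [hzero, norm_zero] at this
    linarith
  set Φ : Matrix m n ℂ → Matrix m n ℂ :=
    fun q => Matrix.of fun j i => (B j i - (q * Bᴴ * q) j i) / ((lam i : ℂ) - (mu j : ℂ)) with hΦ
  -- entrywise division bound
  have hdiv : ∀ (z : ℂ) (j : m) (i : n),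
      ‖z / ((lam i : ℂ) - (mu j : ℂ))‖ ≤ (1 / d₀) * ‖z‖ := by
    intro z j i
    rw [norm_div, one_div, div_eq_mul_inv, mul_comm]
    gcongr
    exact hsep j i
  have hΦnorm : ∀ q : Matrix m n ℂ, ‖Φ q‖ ≤ (1 / d₀) * ‖B - q * Bᴴ * q‖ := by
    intro q
    refine frob_le_of_entrywise _ _ _ (by positivity) fun j i => ?_
    simp only [hΦ, Matrix.of_apply, Matrix.sub_apply]
    exact hdiv _ j i
  have hprod : ∀ q q' : Matrix m n ℂ, ‖q * Bᴴ * q'‖ ≤ ‖q‖ * ‖B‖ * ‖q'‖ := by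
    intro q q'
    calc ‖q * Bᴴ * q'‖ ≤ ‖q * Bᴴ‖ * ‖q'‖ := Matrix.frobenius_norm_mul _ _
      _ ≤ ‖q‖ * ‖Bᴴ‖ * ‖q'‖ := by
          gcongr; exact Matrix.frobenius_norm_mul _ _
      _ = ‖q‖ * ‖B‖ * ‖q'‖ := by rw [Matrix.frobenius_norm_conjTranspose]
  have hball : ∀ q : Matrix m n ℂ, ‖q‖ ≤ r → ‖Φ q‖ ≤ r := by
    intro q hq
    have h1 : ‖Φ q‖ ≤ (1 / d₀) * (‖B‖ + ‖q‖ * ‖B‖ * ‖q‖) := by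
      refine (hΦnorm q).trans ?_
      gcongr
      calc ‖B - q * Bᴴ * q‖ ≤ ‖B‖ + ‖q * Bᴴ * q‖ := norm_sub_le _ _
        _ ≤ ‖B‖ + ‖q‖ * ‖B‖ * ‖q‖ := by gcongr; exact hprod q q
    have h2 : ‖q‖ * ‖B‖ * ‖q‖ ≤ ‖B‖ := by
      have hq1 : ‖q‖ ≤ 1 := hq.trans hr1.le
      nlinarith [mul_le_mul hq1 hq1 (norm_nonneg q) zero_le_one, norm_nonneg q]
    have h4 : (1 / d₀) * (‖B‖ + ‖q‖ * ‖B‖ * ‖q‖) ≤ (1 / d₀) * (‖B‖ + ‖B‖) :=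
      mul_le_mul_of_nonneg_left (by linarith) (by positivity)
    have h5 : (1 / d₀) * (‖B‖ + ‖B‖) = r := by rw [hr_def]; ring
    linarith
  have hlip : ∀ q q' : Matrix m n ℂ, ‖q‖ ≤ r → ‖q'‖ ≤ r →
      ‖Φ q - Φ q'‖ ≤ (r * r) * ‖q - q'‖ := by
    intro q q' hq hq'
    have key : ‖Φ q - Φ q'‖ ≤ (1 / d₀) * ‖q' * Bᴴ * q' - q * Bᴴ * q‖ := by
      refine frob_le_of_entrywise _ _ _ (by positivity) fun j i => ?_
      have : (Φ q - Φ q') j i =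
          ((q' * Bᴴ * q') j i - (q * Bᴴ * q) j i) / ((lam i : ℂ) - (mu j : ℂ)) := by
        simp only [Matrix.sub_apply, hΦ, Matrix.of_apply]
        rw [div_sub_div_same]
        ring_nf
      rw [this]
      simpa [Matrix.sub_apply] using hdiv ((q' * Bᴴ * q') j i - (q * Bᴴ * q) j i) j i
    have hsplit : q' * Bᴴ * q' - q * Bᴴ * q
        = (q' - q) * Bᴴ * q' + q * Bᴴ * (q' - q) := by
      rw [Matrix.sub_mul, Matrix.sub_mul, Matrix.mul_sub]
      abel
    have h2 : ‖q' * Bᴴ * q' - q * Bᴴ * q‖ ≤ (‖q' - q‖ * ‖B‖ * ‖q'‖) + (‖q‖ * ‖B‖ * ‖q' - q‖) := by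
      rw [hsplit]
      refine (norm_add_le _ _).trans ?_
      gcongr
      · exact hprod _ _
      · exact hprod _ _
    have h3 : ‖q' - q‖ = ‖q - q'‖ := norm_sub_rev _ _
    have hd : ‖q' * Bᴴ * q' - q * Bᴴ * q‖ ≤ 2 * r * ‖B‖ * ‖q - q'‖ := by
      rw [h3] at h2
      refine h2.trans ?_
      have e1 : ‖q - q'‖ * ‖B‖ * ‖q'‖ ≤ ‖q - q'‖ * ‖B‖ * r :=
        mul_le_mul_of_nonneg_left hq' (by positivity)
      have e2 : ‖q‖ * (‖B‖ * ‖q - q'‖) ≤ r * (‖B‖ * ‖q - q'‖) :=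
        mul_le_mul_of_nonneg_right hq (by positivity)
      have e2' : ‖q‖ * ‖B‖ * ‖q - q'‖ = ‖q‖ * (‖B‖ * ‖q - q'‖) := mul_assoc _ _ _
      have e3 : ‖q - q'‖ * ‖B‖ * r + r * (‖B‖ * ‖q - q'‖) = 2 * r * ‖B‖ * ‖q - q'‖ := by ring
      linarith
    refine key.trans ?_
    calc (1 / d₀) * ‖q' * Bᴴ * q' - q * Bᴴ * q‖
        ≤ (1 / d₀) * (2 * r * ‖B‖ * ‖q - q'‖) := by gcongr
      _ = (r * r) * ‖q - q'‖ := by rw [hr_def]; ring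
  -- fixed point on the closed ball
  set S := Metric.closedBall (0 : Matrix m n ℂ) r with hS
  haveI : Nonempty S := ⟨⟨0, Metric.mem_closedBall_self hr0⟩⟩
  haveI : CompleteSpace S := (Metric.isClosed_closedBall).completeSpace_coe
  set f : S → S := fun q => ⟨Φ q.1,
    mem_closedBall_zero_iff.mpr (hball q.1 (mem_closedBall_zero_iff.mp q.2))⟩ with hf
  set K : NNReal := Real.toNNReal (r * r) with hK
  have hKcoe : (K : ℝ) = r * r := Real.coe_toNNReal _ (by positivity)
  have hK1 : K < 1 := by
    rw [← NNReal.coe_lt_coe, hKcoe, NNReal.coe_one]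
    nlinarith
  have hcontr : ContractingWith K f := by
    constructor
    · exact hK1
    · refine LipschitzWith.of_dist_le_mul fun q q' => ?_
      simp only [Subtype.dist_eq, dist_eq_norm, hKcoe]
      have hq : ‖q.1‖ ≤ r := by
        have := q.2; rw [Metric.mem_closedBall, dist_zero_right] at this; exact this
      have hq' : ‖q'.1‖ ≤ r := by
        have := q'.2; rw [Metric.mem_closedBall, dist_zero_right] at this; exact this
      exact hlip q.1 q'.1 hq hq'
  have hfix : f (ContractingWith.fixedPoint f hcontr) = ContractingWith.fixedPoint f hcontr :=
    hcontr.fixedPoint_isFixedPt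
  set q : Matrix m n ℂ := (ContractingWith.fixedPoint f hcontr : S).1 with hq_def
  have hΦq : Φ q = q := congrArg Subtype.val hfix
  have hqr : ‖q‖ ≤ r :=
    mem_closedBall_zero_iff.mp (ContractingWith.fixedPoint f hcontr : S).2
  refine ⟨q, hqr, fun j i => ?_⟩
  have hji : Φ q j i = q j i := by rw [hΦq]
  rw [hΦ] at hji
  simp only [Matrix.of_apply] at hji
  have hmul := (div_eq_iff (hne j i)).mp hji
  linear_combination -hmul

private lemma norm_sq_eq_sum_repr {H : Type*} [NormedAddCommGroup H] [InnerProductSpace ℂ H]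
    {κ : Type*} [Fintype κ] (c : OrthonormalBasis κ ℂ H) (y : H) :
    ‖y‖ ^ 2 = ∑ j, ‖c.repr y j‖ ^ 2 := by
  rw [← c.repr.norm_map y, EuclideanSpace.norm_eq, Real.sq_sqrt (by positivity)]

private lemma parseval_sum {H : Type*} [NormedAddCommGroup H] [InnerProductSpace ℂ H]
    {κ : Type*} [Fintype κ] (c : OrthonormalBasis κ ℂ H) (y : H) :
    ∑ j, ‖(inner ℂ (c j) y : ℂ)‖ ^ 2 = ‖y‖ ^ 2 := by
  rw [norm_sq_eq_sum_repr c y]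
  refine Finset.sum_congr rfl fun j _ => ?_
  rw [c.repr_apply_apply]

private lemma hs_indep {E F : Type*} [NormedAddCommGroup E] [InnerProductSpace ℂ E]
    [FiniteDimensional ℂ E] [NormedAddCommGroup F] [InnerProductSpace ℂ F]
    [FiniteDimensional ℂ F] {ι κ : Type*} [Fintype ι] [Fintype κ]
    (b : OrthonormalBasis ι ℂ E) (c : OrthonormalBasis κ ℂ F) (T : E →L[ℂ] F) :
    ∑ i, ‖T (b i)‖ ^ 2 = ∑ j, ‖adjoint T (c j)‖ ^ 2 := by
  calc ∑ i, ‖T (b i)‖ ^ 2 = ∑ i, ∑ j, ‖(inner ℂ (c j) (T (b i)) : ℂ)‖ ^ 2 :=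
        Finset.sum_congr rfl fun i _ => (parseval_sum c _).symm
    _ = ∑ j, ∑ i, ‖(inner ℂ (b i) (adjoint T (c j)) : ℂ)‖ ^ 2 := by
        rw [Finset.sum_comm]
        refine Finset.sum_congr rfl fun j _ => Finset.sum_congr rfl fun i _ => ?_
        rw [ContinuousLinearMap.adjoint_inner_right, norm_inner_symm]
    _ = ∑ j, ‖adjoint T (c j)‖ ^ 2 := Finset.sum_congr rfl fun j _ => parseval_sum b _

private lemma opnorm_le_frob {E F : Type*} [NormedAddCommGroup E] [InnerProductSpace ℂ E]
    [FiniteDimensional ℂ E] [NormedAddCommGroup F] [InnerProductSpace ℂ F]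
    [FiniteDimensional ℂ F] {ι κ : Type*} [Fintype ι] [Fintype κ] [DecidableEq ι]
    (b : OrthonormalBasis ι ℂ E) (c : OrthonormalBasis κ ℂ F) (T : E →L[ℂ] F)
    (q : Matrix κ ι ℂ)
    (hq : LinearMap.toMatrix b.toBasis c.toBasis (T : E →ₗ[ℂ] F) = q) :
    ‖T‖ ≤ ‖q‖ := by
  refine ContinuousLinearMap.opNorm_le_bound _ (norm_nonneg q) fun x => ?_
  have hrepr : ∀ j, c.repr (T x) j = ∑ i, q j i * b.repr x i := by
    intro j
    have h := LinearMap.toMatrix_mulVec_repr b.toBasis c.toBasis (T : E →ₗ[ℂ] F) x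
    rw [hq] at h
    have hj := congrFun h j
    simpa [Matrix.mulVec, dotProduct, OrthonormalBasis.coe_toBasis_repr_apply] using hj.symm
  have key : ‖T x‖ ^ 2 ≤ ‖q‖ ^ 2 * ‖x‖ ^ 2 := by
    have h1 : ‖T x‖ ^ 2 = ∑ j, ‖∑ i, q j i * b.repr x i‖ ^ 2 := by
      rw [norm_sq_eq_sum_repr c (T x)]
      exact Finset.sum_congr rfl fun j _ => by rw [hrepr j]
    have h2 : ∀ j, ‖∑ i, q j i * b.repr x i‖ ^ 2
        ≤ (∑ i, ‖q j i‖ ^ 2) * (∑ i, ‖b.repr x i‖ ^ 2) := by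
      intro j
      have ha : ‖∑ i, q j i * b.repr x i‖ ≤ ∑ i, ‖q j i‖ * ‖b.repr x i‖ := by
        refine (norm_sum_le _ _).trans ?_
        refine Finset.sum_le_sum fun i _ => ?_
        rw [norm_mul]
      calc ‖∑ i, q j i * b.repr x i‖ ^ 2 ≤ (∑ i, ‖q j i‖ * ‖b.repr x i‖) ^ 2 := by
            exact pow_le_pow_left₀ (norm_nonneg _) ha 2
        _ ≤ (∑ i, ‖q j i‖ ^ 2) * (∑ i, ‖b.repr x i‖ ^ 2) :=
            Finset.sum_mul_sq_le_sq_mul_sq Finset.univ _ _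
    have h3 : ‖q‖ ^ 2 = ∑ j, ∑ i, ‖q j i‖ ^ 2 := by
      rw [frob_norm_eq_sqrt, Real.sq_sqrt (by positivity)]
    calc ‖T x‖ ^ 2 = ∑ j, ‖∑ i, q j i * b.repr x i‖ ^ 2 := h1
      _ ≤ ∑ j, (∑ i, ‖q j i‖ ^ 2) * (∑ i, ‖b.repr x i‖ ^ 2) := Finset.sum_le_sum fun j _ => h2 j
      _ = (∑ j, ∑ i, ‖q j i‖ ^ 2) * (∑ i, ‖b.repr x i‖ ^ 2) := by rw [← Finset.sum_mul]
      _ = ‖q‖ ^ 2 * ‖x‖ ^ 2 := by rw [← h3, ← norm_sq_eq_sum_repr b x]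
  have h4 : ‖T x‖ ^ 2 ≤ (‖q‖ * ‖x‖) ^ 2 := by rw [mul_pow]; exact key
  have h5 := Real.sqrt_le_sqrt h4
  rwa [Real.sqrt_sq (norm_nonneg _), Real.sqrt_sq (by positivity)] at h5

private lemma mem_spectrum_of_eigen {H : Type*} [NormedAddCommGroup H] [InnerProductSpace ℂ H]
    [CompleteSpace H] (A : H →L[ℂ] H) (μ : ℂ) (x : H) (hx : x ≠ 0) (h : A x = μ • x) :
    μ ∈ spectrum ℂ A := by
  rw [spectrum.mem_iff]
  intro hu
  obtain ⟨u, hu⟩ := hu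
  have hzero : (algebraMap ℂ (H →L[ℂ] H) μ - A) x = 0 := by
    rw [Algebra.algebraMap_eq_smul_one]
    simp [ContinuousLinearMap.sub_apply, h]
  apply hx
  calc x = (1 : H →L[ℂ] H) x := rfl
    _ = ((↑u⁻¹ * ↑u : H →L[ℂ] H)) x := by rw [Units.inv_mul]
    _ = (↑u⁻¹ : H →L[ℂ] H) ((↑u : H →L[ℂ] H) x) := rfl
    _ = 0 := by rw [hu, hzero, map_zero]

set_option maxHeartbeats 2000000 in
theorem stmt18 {H₁ H₂ : Type*}
    [NormedAddCommGroup H₁] [InnerProductSpace ℂ H₁] [FiniteDimensional ℂ H₁]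
    [NormedAddCommGroup H₂] [InnerProductSpace ℂ H₂] [FiniteDimensional ℂ H₂]
    {ι : Type*} [Fintype ι]
    (A₁ : H₁ →L[ℂ] H₁) (A₂ : H₂ →L[ℂ] H₂)
    (hA₁ : IsSelfAdjoint A₁) (hA₂ : IsSelfAdjoint A₂)
    (d₀ : ℝ) (hd₀ : 0 < d₀)
    (hsep : ∀ x ∈ spectrum ℂ A₁, ∀ y ∈ spectrum ℂ A₂, d₀ ≤ dist x y)
    (B₂₁ : H₁ →L[ℂ] H₂) (b : OrthonormalBasis ι ℂ H₁)
    (hHS : Real.sqrt (∑ i, ‖B₂₁ (b i)‖ ^ 2) < d₀ / 2) :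
    ∃ Q : H₁ →L[ℂ] H₂, ‖Q‖ ≤ 1 ∧
      Q ∘L A₁ - A₂ ∘L Q + Q ∘L adjoint B₂₁ ∘L Q = B₂₁ := by
  classical
  have hsym₁ := hA₁.isSymmetric
  have hsym₂ := hA₂.isSymmetric
  let b₁ : OrthonormalBasis (Fin (Module.finrank ℂ H₁)) ℂ H₁ := hsym₁.eigenvectorBasis rfl
  let b₂ : OrthonormalBasis (Fin (Module.finrank ℂ H₂)) ℂ H₂ := hsym₂.eigenvectorBasis rfl
  let lam : Fin (Module.finrank ℂ H₁) → ℝ := hsym₁.eigenvalues rfl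
  let mu : Fin (Module.finrank ℂ H₂) → ℝ := hsym₂.eigenvalues rfl
  have heig₁ : ∀ i, A₁ (b₁ i) = ((lam i : ℝ) : ℂ) • b₁ i := fun i =>
    hsym₁.apply_eigenvectorBasis rfl i
  have heig₂ : ∀ j, A₂ (b₂ j) = ((mu j : ℝ) : ℂ) • b₂ j := fun j =>
    hsym₂.apply_eigenvectorBasis rfl j
  have hb₁ne : ∀ i, b₁ i ≠ 0 := fun i => by
    have := b₁.toBasis.ne_zero i
    simpa using this
  have hb₂ne : ∀ j, b₂ j ≠ 0 := fun j => by
    have := b₂.toBasis.ne_zero j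
    simpa using this
  have hmem₁ : ∀ i, ((lam i : ℝ) : ℂ) ∈ spectrum ℂ A₁ := fun i =>
    mem_spectrum_of_eigen A₁ _ (b₁ i) (hb₁ne i) (heig₁ i)
  have hmem₂ : ∀ j, ((mu j : ℝ) : ℂ) ∈ spectrum ℂ A₂ := fun j =>
    mem_spectrum_of_eigen A₂ _ (b₂ j) (hb₂ne j) (heig₂ j)
  have hsep' : ∀ j i, d₀ ≤ ‖((lam i : ℝ) : ℂ) - ((mu j : ℝ) : ℂ)‖ := by
    intro j i
    have h1 := hsep _ (hmem₁ i) _ (hmem₂ j)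
    rwa [dist_eq_norm] at h1
  set Bm : Matrix (Fin (Module.finrank ℂ H₂)) (Fin (Module.finrank ℂ H₁)) ℂ :=
    LinearMap.toMatrix b₁.toBasis b₂.toBasis (B₂₁ : H₁ →ₗ[ℂ] H₂) with hBm_def
  have hBmnorm : ‖Bm‖ = Real.sqrt (∑ i, ‖B₂₁ (b₁ i)‖ ^ 2) := by
    rw [frob_norm_eq_sqrt]
    congr 1
    rw [Finset.sum_comm]
    refine Finset.sum_congr rfl fun i _ => ?_
    rw [norm_sq_eq_sum_repr b₂ (B₂₁ (b₁ i))]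
    refine Finset.sum_congr rfl fun j _ => ?_
    rw [hBm_def, LinearMap.toMatrix_apply, OrthonormalBasis.coe_toBasis_repr_apply]
    simp
  have hsum_eq : ∑ i, ‖B₂₁ (b₁ i)‖ ^ 2 = ∑ i, ‖B₂₁ (b i)‖ ^ 2 :=
    (hs_indep b₁ b₂ B₂₁).trans (hs_indep b b₂ B₂₁).symm
  have hBm : ‖Bm‖ < d₀ / 2 := by
    rw [hBmnorm, hsum_eq]
    exact hHS
  obtain ⟨q, hq_norm, hq_eq⟩ := matrix_riccati lam mu d₀ hd₀ hsep' Bm hBm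
  have hq1 : ‖q‖ ≤ 1 := by
    refine hq_norm.trans ?_
    rw [div_le_one hd₀]
    have := norm_nonneg Bm
    linarith
  set Q : H₁ →L[ℂ] H₂ :=
    LinearMap.toContinuousLinearMap (Matrix.toLin b₁.toBasis b₂.toBasis q) with hQ_def
  have hQmat : LinearMap.toMatrix b₁.toBasis b₂.toBasis (Q : H₁ →ₗ[ℂ] H₂) = q := by
    rw [hQ_def, LinearMap.coe_toContinuousLinearMap, LinearMap.toMatrix_toLin]
  have hQnorm : ‖Q‖ ≤ 1 := (opnorm_le_frob b₁ b₂ Q q hQmat).trans hq1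
  refine ⟨Q, hQnorm, ?_⟩
  have hD₁ : LinearMap.toMatrix b₁.toBasis b₁.toBasis (A₁ : H₁ →ₗ[ℂ] H₁)
      = Matrix.diagonal (fun i => ((lam i : ℝ) : ℂ)) := by
    ext k i
    rw [LinearMap.toMatrix_apply]
    simp only [OrthonormalBasis.coe_toBasis, ContinuousLinearMap.coe_coe, heig₁ i, map_smul]
    rw [← OrthonormalBasis.coe_toBasis b₁, Module.Basis.repr_self]
    rcases eq_or_ne k i with h | h
    · subst h; simp
    · simp [Finsupp.single_apply, Matrix.diagonal_apply, h, Ne.symm h]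
  have hD₂ : LinearMap.toMatrix b₂.toBasis b₂.toBasis (A₂ : H₂ →ₗ[ℂ] H₂)
      = Matrix.diagonal (fun j => ((mu j : ℝ) : ℂ)) := by
    ext k j
    rw [LinearMap.toMatrix_apply]
    simp only [OrthonormalBasis.coe_toBasis, ContinuousLinearMap.coe_coe, heig₂ j, map_smul]
    rw [← OrthonormalBasis.coe_toBasis b₂, Module.Basis.repr_self]
    rcases eq_or_ne k j with h | h
    · subst h; simp
    · simp [Finsupp.single_apply, Matrix.diagonal_apply, h, Ne.symm h]
  have h0 : LinearMap.toContinuousLinearMap (B₂₁ : H₁ →ₗ[ℂ] H₂) = B₂₁ :=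
    ContinuousLinearMap.coe_injective (LinearMap.coe_toContinuousLinearMap _)
  have hadj : ((adjoint B₂₁ : H₂ →L[ℂ] H₁) : H₂ →ₗ[ℂ] H₁)
      = LinearMap.adjoint (B₂₁ : H₁ →ₗ[ℂ] H₂) := by
    rw [LinearMap.adjoint_eq_toCLM_adjoint, h0]
  have hAdj : LinearMap.toMatrix b₂.toBasis b₁.toBasis
      ((adjoint B₂₁ : H₂ →L[ℂ] H₁) : H₂ →ₗ[ℂ] H₁) = Bmᴴ := by
    rw [hadj, LinearMap.toMatrix_adjoint, hBm_def]
  apply ContinuousLinearMap.coe_injective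
  apply (LinearMap.toMatrix b₁.toBasis b₂.toBasis).injective
  simp only [ContinuousLinearMap.coe_add, ContinuousLinearMap.coe_sub,
    ContinuousLinearMap.toLinearMap_comp, map_add, map_sub]
  rw [LinearMap.toMatrix_comp b₁.toBasis b₁.toBasis b₂.toBasis,
    LinearMap.toMatrix_comp b₁.toBasis b₂.toBasis b₂.toBasis]
  rw [LinearMap.toMatrix_comp b₁.toBasis b₁.toBasis b₂.toBasis,
    LinearMap.toMatrix_comp b₁.toBasis b₂.toBasis b₁.toBasis]
  rw [hD₁, hD₂, hQmat, hAdj, ← hBm_def]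
  ext j i
  simp only [Matrix.sub_apply, Matrix.add_apply, Matrix.mul_diagonal, Matrix.diagonal_mul]
  rw [← Matrix.mul_assoc]
  linear_combination hq_eq j i

end RiccatiAux
end
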